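/- Fix λ > 0, δ ∈ (0,1), and M ∈ (0,∞). For s > 0 and μ ∈ 𝒢(δ, M) define κ₁(s; μ) = (s (1 − ρ) / φ(−s)) · ( φ′(0) (s φ(s) − s² φ′(s)) / φ(s)³ + s φ′(0) λ m₂ / (2 φ(s) (1 − ρ)²) ). Then there exists a constant 0 < K₁ < ∞ such that |κ₁(s; μ)| ≤ K₁ for every μ ∈ 𝒢(δ, M) and every s > 0. -/

import Mathlib

open MeasureTheory

/-- The characteristic function of a measure `μ` on `ℝ`. -/
noncomputable def charFn (μ : Measure ℝ) (s : ℝ) : ℂ :=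
  ∫ x, Complex.exp (Complex.I * s * x) ∂μ

/-- The characteristic exponent `φ(s) = λ(γ(s) − 1) − i s` of the net input process. -/
noncomputable def phi (lam : ℝ) (μ : Measure ℝ) (s : ℝ) : ℂ :=
  lam * (charFn μ s - 1) - Complex.I * s

/-- The derivative of the characteristic exponent: `φ′(s) = λ ∫ i x exp(i s x) dμ(x) − i`. -/
noncomputable def phiDeriv (lam : ℝ) (μ : Measure ℝ) (s : ℝ) : ℂ :=
  lam * ∫ x, Complex.I * x * Complex.exp (Complex.I * s * x) ∂μ - Complex.I

/-- The `k`-th moment of a measure on `ℝ`. -/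
noncomputable def moment (μ : Measure ℝ) (k : ℕ) : ℝ :=
  ∫ x, x ^ k ∂μ

/-- The quantity `κ₁(s; μ)` of Lemma 3.4:
`κ₁ = (s(1−ρ)/φ(−s)) ( φ′(0)(sφ(s) − s²φ′(s))/φ(s)³ + sφ′(0)λm₂/(2φ(s)(1−ρ)²) )`. -/
noncomputable def kappa1 (lam : ℝ) (μ : Measure ℝ) (s : ℝ) : ℂ :=
  ((s : ℂ) * ((1 : ℂ) - lam * moment μ 1) / phi lam μ (-s)) *
    (phiDeriv lam μ 0 * ((s : ℂ) * phi lam μ s - (s : ℂ) ^ 2 * phiDeriv lam μ s)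
        / (phi lam μ s) ^ 3 +
      (s : ℂ) * phiDeriv lam μ 0 * lam * moment μ 2 /
        (2 * phi lam μ s * ((1 : ℂ) - lam * moment μ 1) ^ 2))

/-!
Write `r = 1 - λ m₁`. Since `sin y ≤ y` for `y ≥ 0`, `-Im φ(s) ≥ r s`, and `φ(-s) = conj φ(s)`, so
`|φ(±s)| ≥ r s`. Differentiating `v ↦ e^{iv} - 1 - iv e^{iv}` (derivative `v e^{iv}`) gives
`|e^{iv} - 1 - iv e^{iv}| ≤ v²/2`, hence `|φ(s) - s φ'(s)| ≤ λ m₂ s²/2`; and `φ'(0) = -i r`.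
With these, the prefactor of `κ₁` has modulus at most `1` and each summand at most `λ m₂ / (2 r²)`,
so `|κ₁| ≤ λ m₂ / r² ≤ λ (1 + M) / δ²`, using `m₂ ≤ 1 + m₃` for a measure on `[0, ∞)`.
-/

open Complex ComplexConjugate

theorem norm_exp_I_mul_sub_one_sub_I_mul_mul_exp_le {v : ℝ} (hv : 0 ≤ v) :
    ‖exp (I * v) - 1 - I * v * exp (I * v)‖ ≤ v ^ 2 / 2 := by
  have hf (t : ℝ) : HasDerivAt (fun t : ℝ ↦ exp (I * t) - 1 - I * t * exp (I * t))
      (t * exp (I * t)) t := by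
    have he : HasDerivAt (fun t : ℝ ↦ exp (I * t)) (exp (I * t) * I) t := by
      simpa using ((hasDerivAt_id (t : ℂ)).const_mul I).cexp.comp_ofReal
    have hl : HasDerivAt (fun t : ℝ ↦ I * t) I t := by
      simpa using ((hasDerivAt_id (t : ℂ)).const_mul I).comp_ofReal
    exact ((he.sub_const 1).sub (hl.mul he)).congr_deriv
      (by linear_combination (-t * exp (I * t)) * I_sq)
  have hB (t : ℝ) : HasDerivAt (fun t : ℝ ↦ t ^ 2 / 2) t t :=
    ((hasDerivAt_pow 2 t).div_const 2).congr_deriv (by push_cast; ring)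
  refine image_norm_le_of_norm_deriv_right_le_deriv_boundary (a := 0) (b := v)
    (fun t _ ↦ (hf t).continuousAt.continuousWithinAt) (fun t _ ↦ (hf t).hasDerivWithinAt)
    (by simp) hB (fun t ht ↦ ?_) ⟨hv, le_rfl⟩
  rw [norm_mul, norm_exp_I_mul_ofReal, mul_one, norm_real, Real.norm_of_nonneg ht.1]

section
variable {lam s : ℝ} {μ : Measure ℝ}

lemma I_mul_ofReal_mul_ofReal (s x : ℝ) : I * s * x = I * ((s * x : ℝ) : ℂ) := by
  push_cast; ring

lemma phiDeriv_zero : phiDeriv lam μ 0 = -I * ((1 - lam * moment μ 1 : ℝ) : ℂ) := by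
  simp only [phiDeriv, moment, ofReal_zero, mul_zero, zero_mul, exp_zero, mul_one, pow_one,
    integral_const_mul]
  rw [integral_complex_ofReal]
  push_cast
  ring

lemma phi_neg : phi lam μ (-s) = conj (phi lam μ s) := by
  simp only [phi, charFn, ← integral_conj, map_sub, map_mul, ← exp_conj, conj_ofReal, conj_I,
    map_one, ofReal_neg]
  ring_nf

lemma integrable_exp_I_mul [IsFiniteMeasure μ] (s : ℝ) :
    Integrable (fun x : ℝ ↦ exp (I * s * x)) μ :=
  .of_bound (by fun_prop) 1 <| .of_forall fun x ↦ by
    rw [I_mul_ofReal_mul_ofReal, norm_exp_I_mul_ofReal]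

lemma integrable_mul_exp_I_mul (s : ℝ) (h1 : Integrable (fun x ↦ x) μ) :
    Integrable (fun x : ℝ ↦ I * x * exp (I * s * x)) μ :=
  h1.norm.mono' (by fun_prop) <| .of_forall fun x ↦ by
    rw [I_mul_ofReal_mul_ofReal, norm_mul, norm_exp_I_mul_ofReal, norm_mul, norm_I, norm_real]; simp

lemma phi_sub_mul_phiDeriv [IsProbabilityMeasure μ] (h1 : Integrable (fun x ↦ x) μ) :
    phi lam μ s - s * phiDeriv lam μ s
      = lam * ∫ x, (exp (I * s * x) - 1 - I * s * x * exp (I * s * x)) ∂μ := by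
  have hexp := integrable_exp_I_mul (μ := μ) s
  have hx := (integrable_mul_exp_I_mul s h1).const_mul (s : ℂ)
  simp only [show ∀ x : ℝ, I * s * x * exp (I * s * x) = s * (I * x * exp (I * s * x))
    from fun x ↦ by ring]
  rw [integral_sub (f := fun x : ℝ ↦ exp (I * s * x) - 1) (hexp.sub (integrable_const 1)) hx,
    integral_sub hexp (integrable_const 1), integral_const_mul, integral_const, probReal_univ,
    one_smul, phi, phiDeriv, charFn]
  ring

lemma norm_phi_sub_mul_phiDeriv_le [IsProbabilityMeasure μ] (hlam : 0 ≤ lam) (hs : 0 ≤ s)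
    (hμ : ∀ᵐ x ∂μ, 0 ≤ x) (h1 : Integrable (fun x ↦ x) μ) (h2 : Integrable (fun x ↦ x ^ 2) μ) :
    ‖phi lam μ s - s * phiDeriv lam μ s‖ ≤ lam * moment μ 2 * s ^ 2 / 2 := by
  have hint : ‖∫ x, (exp (I * s * x) - 1 - I * s * x * exp (I * s * x)) ∂μ‖
      ≤ ∫ x, s ^ 2 / 2 * x ^ 2 ∂μ := by
    refine norm_integral_le_of_norm_le (h2.const_mul _) ?_
    filter_upwards [hμ] with x hx
    have := norm_exp_I_mul_sub_one_sub_I_mul_mul_exp_le (mul_nonneg hs hx)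
    rw [I_mul_ofReal_mul_ofReal]
    exact this.trans_eq (by ring)
  rw [integral_const_mul] at hint
  rw [phi_sub_mul_phiDeriv h1, norm_mul, norm_real, Real.norm_of_nonneg hlam]
  calc lam * _ ≤ lam * (s ^ 2 / 2 * moment μ 2) := mul_le_mul_of_nonneg_left hint hlam
    _ = _ := by ring

lemma phi_im [IsFiniteMeasure μ] : (phi lam μ s).im = lam * ∫ x, Real.sin (s * x) ∂μ - s := by
  have : (charFn μ s).im = ∫ x, Real.sin (s * x) ∂μ := by
    have := integral_im (integrable_exp_I_mul (μ := μ) s)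
    simp only [RCLike.im_to_complex] at this
    rw [charFn, ← this]
    congr with x
    rw [I_mul_ofReal_mul_ofReal, mul_comm, exp_ofReal_mul_I_im]
  simp [phi, this]

lemma mul_le_norm_phi [IsFiniteMeasure μ] (hlam : 0 ≤ lam) (hs : 0 ≤ s)
    (hμ : ∀ᵐ x ∂μ, 0 ≤ x) (h1 : Integrable (fun x ↦ x) μ) :
    (1 - lam * moment μ 1) * s ≤ ‖phi lam μ s‖ := by
  have hsin : ∫ x, Real.sin (s * x) ∂μ ≤ s * moment μ 1 := by
    rw [moment, ← integral_const_mul]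
    refine integral_mono_ae ?_ (by simpa using h1.const_mul s) ?_
    · exact .of_bound (by fun_prop) 1 (.of_forall fun x ↦ by simpa using Real.abs_sin_le_one _)
    · filter_upwards [hμ] with x hx
      simpa using Real.sin_le (mul_nonneg hs hx)
  calc (1 - lam * moment μ 1) * s ≤ -(phi lam μ s).im := by
        rw [phi_im]; nlinarith [mul_le_mul_of_nonneg_left hsin hlam]
    _ ≤ ‖phi lam μ s‖ := (neg_le_abs _).trans (abs_im_le_norm _)

lemma moment_two_le_one_add_moment_three [IsProbabilityMeasure μ] (hμ : ∀ᵐ x ∂μ, 0 ≤ x)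
    (h2 : Integrable (fun x ↦ x ^ 2) μ) (h3 : Integrable (fun x ↦ x ^ 3) μ) :
    moment μ 2 ≤ 1 + moment μ 3 := by
  have : moment μ 2 ≤ ∫ x, (1 + x ^ 3) ∂μ := by
    refine integral_mono_ae h2 ((integrable_const 1).add h3) ?_
    filter_upwards [hμ] with x hx
    nlinarith [mul_nonneg (add_nonneg hx zero_le_one) (sq_nonneg (x - 1))]
  simpa [integral_add (integrable_const 1) h3, moment] using this

lemma norm_kappa1_le [IsProbabilityMeasure μ] (hlam : 0 ≤ lam) (hs : 0 < s)
    (hμ : ∀ᵐ x ∂μ, 0 ≤ x) (h1 : Integrable (fun x ↦ x) μ) (h2 : Integrable (fun x ↦ x ^ 2) μ)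
    (hρ : lam * moment μ 1 < 1) :
    ‖kappa1 lam μ s‖ ≤ lam * moment μ 2 / (1 - lam * moment μ 1) ^ 2 := by
  set r := 1 - lam * moment μ 1 with hr_def
  set c := lam * moment μ 2
  have hr : 0 < r := sub_pos.2 hρ
  have hrs : 0 < r * s := mul_pos hr hs
  have hc : 0 ≤ c := mul_nonneg hlam (integral_nonneg fun x ↦ sq_nonneg x)
  have hr' : (1 : ℂ) - lam * moment μ 1 = r := by push_cast [hr_def]; ring
  have hA : r * s ≤ ‖phi lam μ s‖ := mul_le_norm_phi hlam hs.le hμ h1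
  have hB : r * s ≤ ‖phi lam μ (-s)‖ := by rwa [phi_neg, norm_conj]
  have hD := norm_phi_sub_mul_phiDeriv_le hlam hs.le hμ h1 h2
  have hpre : ‖(s : ℂ) * (1 - lam * moment μ 1) / phi lam μ (-s)‖ ≤ 1 := by
    rw [hr', norm_div, norm_mul, norm_real, norm_real, Real.norm_of_nonneg hs.le,
      Real.norm_of_nonneg hr.le, mul_comm]
    exact div_le_one_of_le₀ hB (norm_nonneg _)
  have hT1 : ‖phiDeriv lam μ 0 * (s * phi lam μ s - s ^ 2 * phiDeriv lam μ s)
      / phi lam μ s ^ 3‖ ≤ c / r ^ 2 / 2 := by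
    rw [show (s : ℂ) * phi lam μ s - s ^ 2 * phiDeriv lam μ s
        = s * (phi lam μ s - s * phiDeriv lam μ s) by ring, phiDeriv_zero, norm_div, norm_mul,
      norm_mul, norm_mul, norm_pow, norm_neg, norm_I, one_mul, norm_real, norm_real,
      Real.norm_of_nonneg hr.le, Real.norm_of_nonneg hs.le]
    calc r * (s * ‖phi lam μ s - s * phiDeriv lam μ s‖) / ‖phi lam μ s‖ ^ 3
        ≤ r * (s * (c * s ^ 2 / 2)) / (r * s) ^ 3 := by gcongr
      _ = c / r ^ 2 / 2 := by field_simp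
  have hT2 : ‖(s : ℂ) * phiDeriv lam μ 0 * lam * moment μ 2
      / (2 * phi lam μ s * (1 - lam * moment μ 1) ^ 2)‖ ≤ c / r ^ 2 / 2 := by
    rw [hr', phiDeriv_zero,
      show (s : ℂ) * (-I * r) * lam * moment μ 2 = -I * ((s * r * c : ℝ) : ℂ) by
        simp only [c]; push_cast; ring,
      norm_div, norm_mul, norm_mul, norm_mul, norm_neg, norm_I, one_mul, norm_pow, norm_real,
      norm_real, Real.norm_of_nonneg (by positivity),
      Real.norm_of_nonneg hr.le, Complex.norm_two]
    calc s * r * c / (2 * ‖phi lam μ s‖ * r ^ 2) ≤ s * r * c / (2 * (r * s) * r ^ 2) := by gcongr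
      _ = c / r ^ 2 / 2 := by field_simp
  calc ‖kappa1 lam μ s‖ ≤ 1 * (c / r ^ 2 / 2 + c / r ^ 2 / 2) := by
        rw [kappa1, norm_mul]
        exact mul_le_mul hpre ((norm_add_le _ _).trans (add_le_add hT1 hT2)) (norm_nonneg _)
          zero_le_one
    _ = c / r ^ 2 := by rw [one_mul, add_halves]

end

/-- For fixed `λ > 0`, `δ ∈ (0,1)` and `M ∈ (0,∞)`, there is `0 < K₁ < ∞` with
`|κ₁(s; μ)| ≤ K₁` for every `μ ∈ 𝒢(δ, M)` and every `s > 0`. -/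
theorem kappa1_uniformly_bounded (lam : ℝ) (hlam : 0 < lam) (δ : ℝ)
    (hδ : δ ∈ Set.Ioo (0 : ℝ) 1) (M : ℝ) (hM : 0 < M) :
    ∃ K₁ : ℝ, 0 < K₁ ∧
      ∀ (μ : Measure ℝ), IsProbabilityMeasure μ → μ (Set.Ici 0) = 1 →
        Integrable (fun x => x) μ → Integrable (fun x => x ^ 2) μ →
        Integrable (fun x => x ^ 3) μ →
        lam * moment μ 1 ≤ 1 - δ → moment μ 3 ≤ M →
        ∀ s : ℝ, 0 < s → ‖kappa1 lam μ s‖ ≤ K₁ := by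
  have hδ₀ := hδ.1
  refine ⟨lam * (1 + M) / δ ^ 2, by positivity, fun μ _ hsupp h1 h2 h3 hρ hm3 s hs ↦ ?_⟩
  have hμ : ∀ᵐ x ∂μ, 0 ≤ x := mem_ae_iff.2 ((prob_compl_eq_zero_iff measurableSet_Ici).2 hsupp)
  have hr : δ ≤ 1 - lam * moment μ 1 := by linarith
  calc ‖kappa1 lam μ s‖ ≤ lam * moment μ 2 / (1 - lam * moment μ 1) ^ 2 :=
        norm_kappa1_le hlam.le hs hμ h1 h2 (by linarith)
    _ ≤ lam * (1 + M) / δ ^ 2 := by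
        gcongr
        linarith [moment_two_le_one_add_moment_three hμ h2 h3]
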